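/- arXiv:2309.03797 — 2 statements merged into one kernel-verified Lean document; each statement's English description precedes it below -/
import Mathlib

section
/- Let E be a measurable space, let X₁,…,X_{N₀}, X_{N₀+1} be independent, identically distributed E-valued random variables with common law μ, fix α ∈ (0,1) and L a positive integer, and let σ₁,…,σ_L : E → ℝ be measurable score functions such that for each l the pushforward of μ under σ_l is atomless. Define recursively k_l = ⌊α(N_{l−1}+1)⌋ and N_l = N_{l−1} − k_l for l = 1,…,L, and define thresholds iteratively: W₀ = {1,…,N₀}; for l = 1,…,L, if k_l ≥ 1 let t_l be the k_l-th smallest value among {σ_l(X_i) : i ∈ W_{l−1}} and let W_l be W_{l−1} with the k_l indices attaining those smallest values removed (almost surely well-defined since ties have probability zero), and if k_l = 0 set t_l = −∞ and W_l = W_{l−1}. Then P( σ_l(X_{N₀+1}) ≥ t_l for all l = 1,…,L ) = 1 − (Σ_{l=1}^L k_l)/(N₀+1). -/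
open MeasureTheory ProbabilityTheory Finset

noncomputable section

/-- The `k`-th smallest value (1-indexed) attained by `f` on the finite index set `s`
(counted with multiplicity). -/
def kthSmallestVal {ι : Type*} (s : Finset ι) (f : ι → ℝ) (k : ℕ) : ℝ :=
  ((s.val.map f).sort (· ≤ ·)).getD (k - 1) 0

/-- Remove from `s` the `k` indices attaining the smallest values of `f`
(ties, which are almost surely absent, broken by the index order). -/
def removeKSmallest {ι : Type*} [LinearOrder ι] (s : Finset ι) (f : ι → ℝ) (k : ℕ) : Finset ι :=
  s.filter (fun i => k < (s.filter (fun j => f j < f i ∨ (f j = f i ∧ j ≤ i))).card)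

/-- The iteratively pruned index sets: `W_0` is everything, and `W_l` is `W_{l-1}` with the
`k_l` indices attaining the smallest values of `f l` removed. -/
def pruneSeq {ι : Type*} [LinearOrder ι] [Fintype ι] (f : ℕ → ι → ℝ) (k : ℕ → ℕ) :
    ℕ → Finset ι
  | 0 => Finset.univ
  | l + 1 => removeKSmallest (pruneSeq f k l) (f (l + 1)) (k (l + 1))

/-- The sequence `N_l` of remaining calibration sample sizes:
`N_0 = N₀` and `N_l = N_{l-1} - ⌊α (N_{l-1}+1)⌋`. -/
def conformalN (α : ℝ) (N0 : ℕ) : ℕ → ℕ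
  | 0 => N0
  | l + 1 => conformalN α N0 l - ⌊α * (conformalN α N0 l + 1)⌋₊

/-- The number of samples removed at step `l ≥ 1`: `k_l = ⌊α (N_{l-1}+1)⌋`. -/
def conformalK (α : ℝ) (N0 : ℕ) (l : ℕ) : ℕ := ⌊α * (conformalN α N0 (l - 1) + 1)⌋₊

/-! Almost surely no two samples share a score. Then the fresh sample passes all `L` thresholds
exactly when it survives the same pruning applied to the whole sample `X₁, …, X_{N₀+1}`: as long
as it lies above the threshold, inserting it does not change which calibration points are
removed, and otherwise it is removed itself. Pruning the whole sample is equivariant under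
permutations of the indices and always keeps `N₀ + 1 - ∑ k_l` of them, so by exchangeability
every index, the last one in particular, survives with probability `(N₀ + 1 - ∑ k_l)/(N₀ + 1)`. -/

section Rank

variable {ι β : Type*}

theorem card_filter_comp_eq_card_filter_image [DecidableEq β] {s : Finset ι} {g : ι → β}
    (hg : Set.InjOn g s) (p : β → Prop) [DecidablePred p] :
    #{i ∈ s | p (g i)} = #{t ∈ s.image g | p t} := by
  rw [filter_image, card_image_of_injOn (hg.mono (filter_subset _ s))]

variable [LinearOrder β]

theorem card_filter_le_lt_card_filter_le {s : Finset ι} {g : ι → β} {i : ι} {v : β}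
    (hi : i ∈ s) (hv : v < g i) : #{j ∈ s | g j ≤ v} < #{j ∈ s | g j ≤ g i} :=
  card_lt_card <| (ssubset_iff_of_subset (monotone_filter_right _ fun _ _ hj => hj.trans hv.le)).2
    ⟨i, mem_filter.2 ⟨hi, le_rfl⟩, fun h => (mem_filter.1 h).2.not_gt hv⟩

theorem card_filter_le_orderEmbOfFin (T : Finset β) (j : Fin #T) :
    #{u ∈ T | u ≤ T.orderEmbOfFin rfl j} = j + 1 := by
  calc #{u ∈ T | u ≤ T.orderEmbOfFin rfl j}
      = #{u ∈ univ.map (T.orderEmbOfFin rfl).toEmbedding | u ≤ T.orderEmbOfFin rfl j} := by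
        rw [T.map_orderEmbOfFin_univ rfl]
    _ = #(Iic j) := by
        rw [filter_map, card_map, ← filter_ge_eq_Iic]
        simp
    _ = j + 1 := Fin.card_Iic j

theorem orderEmbOfFin_le_iff_lt_card_filter_le (T : Finset β) (j : Fin #T) (v : β) :
    T.orderEmbOfFin rfl j ≤ v ↔ (j : ℕ) < #{u ∈ T | u ≤ v} := by
  rw [← Nat.add_one_le_iff, ← card_filter_le_orderEmbOfFin]
  constructor
  · intro h
    exact card_le_card (monotone_filter_right _ fun _ _ hu => hu.trans h)
  · intro h
    by_contra! hlt
    exact (card_filter_le_lt_card_filter_le (g := fun u => u)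
      (T.orderEmbOfFin_mem rfl j) hlt).not_ge h

theorem card_filter_lt_card_filter_le (T : Finset β) (k : ℕ) :
    #{t ∈ T | k < #{u ∈ T | u ≤ t}} = #T - k := by
  calc #{t ∈ T | k < #{u ∈ T | u ≤ t}}
      = #{t ∈ univ.map (T.orderEmbOfFin rfl).toEmbedding | k < #{u ∈ T | u ≤ t}} := by
        rw [T.map_orderEmbOfFin_univ rfl]
    _ = #{j : Fin #T | k < (j : ℕ) + 1} := by
        rw [filter_map, card_map]
        simp only [Function.comp_def, RelEmbedding.coe_toEmbedding, card_filter_le_orderEmbOfFin]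
    _ = #T - k := by
        have := card_filter_add_card_filter_not (s := (univ : Finset (Fin #T))) (· < k)
        rw [Fin.card_filter_val_lt, card_univ, Fintype.card_fin] at this
        simp only [not_lt, Nat.le_iff_lt_add_one] at this
        omega

end Rank

section OrderStatistics

variable {ι : Type*} {s : Finset ι} {f : ι → ℝ} {k : ℕ}

theorem kthSmallestVal_eq_orderEmbOfFin (hf : Set.InjOn f s) (hk : 1 ≤ k) (hks : k ≤ #s) :
    kthSmallestVal s f k =
      (s.image f).orderEmbOfFin rfl ⟨k - 1, by rw [card_image_of_injOn hf]; omega⟩ := by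
  have hsort : (s.val.map f).sort (· ≤ ·) = (s.image f).sort (· ≤ ·) := by
    rw [← sort_val, image_val,
      Multiset.dedup_eq_self.2 (s.nodup.map_on fun _ hx _ hy h => hf hx hy h)]
  rw [kthSmallestVal, hsort, orderEmbOfFin_apply,
    List.getD_eq_getElem _ _ (by rw [length_sort, card_image_of_injOn hf]; omega)]
  rfl

theorem kthSmallestVal_le_iff (hf : Set.InjOn f s) (hk : 1 ≤ k) (hks : k ≤ #s) {v : ℝ} :
    kthSmallestVal s f k ≤ v ↔ k ≤ #{i ∈ s | f i ≤ v} := by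
  rw [kthSmallestVal_eq_orderEmbOfFin hf hk hks, orderEmbOfFin_le_iff_lt_card_filter_le,
    card_filter_comp_eq_card_filter_image hf (· ≤ v), Fin.val_mk]
  omega

theorem kthSmallestVal_map {κ : Type*} (e : κ ↪ ι) (s : Finset κ) :
    kthSmallestVal (s.map e) f k = kthSmallestVal s (f ∘ e) k := by
  simp [kthSmallestVal, Multiset.map_map]

theorem card_filter_le_insert [DecidableEq ι] {a : ι} (ha : a ∉ s) (v : ℝ) :
    #{j ∈ insert a s | f j ≤ v} = #{j ∈ s | f j ≤ v} + if f a ≤ v then 1 else 0 := by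
  rw [filter_insert]
  split_ifs
  · rw [card_insert_of_notMem fun h => ha (mem_filter.1 h).1]
  · rfl

variable [LinearOrder ι]

theorem mem_removeKSmallest_iff (hf : Set.InjOn f s) {i : ι} :
    i ∈ removeKSmallest s f k ↔ i ∈ s ∧ k < #{j ∈ s | f j ≤ f i} := by
  rw [removeKSmallest, mem_filter]
  refine and_congr_right fun hi => ?_
  have : {j ∈ s | f j < f i ∨ (f j = f i ∧ j ≤ i)} = {j ∈ s | f j ≤ f i} := by
    refine filter_congr fun j hj => ⟨?_, fun h => ?_⟩
    · rintro (h | ⟨h, -⟩)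
      exacts [h.le, h.le]
    · rcases h.lt_or_eq with h | h
      exacts [Or.inl h, Or.inr ⟨h, (hf hj hi h).le⟩]
  rw [this]

theorem removeKSmallest_subset : removeKSmallest s f k ⊆ s := filter_subset _ _

theorem removeKSmallest_zero : removeKSmallest s f 0 = s :=
  filter_true_of_mem fun i hi => card_pos.2 ⟨i, mem_filter.2 ⟨hi, Or.inr ⟨rfl, le_rfl⟩⟩⟩

theorem card_removeKSmallest (s : Finset ι) (f : ι → ℝ) (k : ℕ) :
    #(removeKSmallest s f k) = #s - k := by
  -- ties are broken lexicographically, so the ranks are those of an injective map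
  let g : ι → ℝ ×ₗ ι := fun i => toLex (f i, i)
  have hg : g.Injective := fun i j h => (Prod.ext_iff.1 (toLex.injective h)).2
  calc #(removeKSmallest s f k)
      = #{i ∈ s | k < #{u ∈ s.image g | u ≤ g i}} := by
        simp only [removeKSmallest, ← card_filter_comp_eq_card_filter_image hg.injOn, g,
          Prod.Lex.toLex_le_toLex]
    _ = #{t ∈ s.image g | k < #{u ∈ s.image g | u ≤ t}} :=
        card_filter_comp_eq_card_filter_image hg.injOn (fun t => k < #{u ∈ s.image g | u ≤ t})
    _ = #s - k := by rw [card_filter_lt_card_filter_le, card_image_of_injective _ hg]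

theorem removeKSmallest_map {κ : Type*} [LinearOrder κ] (e : κ ↪ ι) (s : Finset κ)
    (hf : Set.InjOn f (s.map e)) :
    removeKSmallest (s.map e) f k = (removeKSmallest s (f ∘ e) k).map e := by
  have hfe : Set.InjOn (f ∘ e) s := fun x hx y hy h =>
    e.injective (hf (mem_map_of_mem e hx) (mem_map_of_mem e hy) h)
  ext i
  by_cases hi : i ∈ s.map e
  · obtain ⟨j, hj, rfl⟩ := mem_map.1 hi
    rw [mem_removeKSmallest_iff hf, mem_map', mem_map', mem_removeKSmallest_iff hfe, filter_map,
      card_map]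
    rfl
  · exact iff_of_false (fun h => hi (removeKSmallest_subset h))
      fun h => hi (map_subset_map.2 removeKSmallest_subset h)

theorem mem_removeKSmallest_insert_iff [DecidableEq ι] {a : ι} (ha : a ∉ s)
    (hf : Set.InjOn f (insert a s : Finset ι)) (hks : k ≤ #s) :
    a ∈ removeKSmallest (insert a s) f k ↔ k = 0 ∨ kthSmallestVal s f k ≤ f a := by
  rcases Nat.eq_zero_or_pos k with rfl | hk
  · simp [removeKSmallest_zero]
  rw [mem_removeKSmallest_iff hf, card_filter_le_insert ha, if_pos le_rfl,
    kthSmallestVal_le_iff (hf.mono (subset_insert a s)) hk hks]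
  simp only [mem_insert_self, true_and, hk.ne', false_or]
  omega

theorem removeKSmallest_insert [DecidableEq ι] {a : ι} (ha : a ∉ s)
    (hf : Set.InjOn f (insert a s : Finset ι)) (hks : k ≤ #s)
    (hpass : k = 0 ∨ kthSmallestVal s f k ≤ f a) :
    removeKSmallest (insert a s) f k = insert a (removeKSmallest s f k) := by
  rcases Nat.eq_zero_or_pos k with rfl | hk
  · simp [removeKSmallest_zero]
  have hfs : Set.InjOn f s := hf.mono (subset_insert a s)
  replace hpass := (kthSmallestVal_le_iff hfs hk hks).1 (hpass.resolve_left hk.ne')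
  ext i
  rw [mem_insert, mem_removeKSmallest_iff hf, mem_removeKSmallest_iff hfs, mem_insert,
    card_filter_le_insert ha]
  by_cases hia : i = a
  · subst hia
    simpa only [le_refl, if_true, true_or, true_and, iff_true] using Nat.lt_add_one_of_le hpass
  simp only [hia, false_or]
  refine and_congr_right fun hi => ?_
  split_ifs with hai
  · have hlt : f a < f i :=
      hai.lt_of_ne fun h => hia (hf (mem_insert_of_mem hi) (mem_insert_self a s) h.symm)
    have := card_filter_le_lt_card_filter_le hi hlt
    omega
  · rfl

end OrderStatistics

section PruneSeq

variable {ι : Type*} [LinearOrder ι] [Fintype ι] {F : ℕ → ι → ℝ} {k : ℕ → ℕ} {l : ℕ}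

theorem card_pruneSeq (F : ℕ → ι → ℝ) (k : ℕ → ℕ) (l : ℕ) :
    #(pruneSeq F k l) = Fintype.card ι - ∑ m ∈ Icc 1 l, k m := by
  induction l with
  | zero => simp [pruneSeq]
  | succ l ih =>
    rw [pruneSeq, card_removeKSmallest, ih, sum_Icc_succ_top (by omega), Nat.sub_sub]

theorem le_card_pruneSeq (hk : ∑ m ∈ Icc 1 (l + 1), k m ≤ Fintype.card ι) :
    k (l + 1) ≤ #(pruneSeq F k l) := by
  rw [sum_Icc_succ_top (by omega)] at hk
  rw [card_pruneSeq]
  omega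

theorem map_pruneSeq_comp_equiv {κ : Type*} [LinearOrder κ] [Fintype κ] (e : κ ≃ ι)
    (hF : ∀ m ∈ Icc 1 l, (F m).Injective) :
    (pruneSeq (fun m => F m ∘ e) k l).map e.toEmbedding = pruneSeq F k l := by
  induction l with
  | zero => simp [pruneSeq]
  | succ l ih =>
    rw [pruneSeq, pruneSeq, ← ih fun m hm => hF m (Icc_subset_Icc_right l.le_succ hm),
      removeKSmallest_map _ _ (hF (l + 1) (by simp)).injOn]
    rfl

end PruneSeq

section FreshSample

variable {n : ℕ}

/-- The paper's threshold `t_l`, calibrated on the first `n` samples (`⊥` stands for `-∞`). -/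
def calibratedThreshold (F : ℕ → Fin (n + 1) → ℝ) (k : ℕ → ℕ) (l : ℕ) : EReal :=
  if k l = 0 then ⊥ else
    ((kthSmallestVal (pruneSeq (fun m (i : Fin n) => F m i.castSucc) k (l - 1))
      (fun (i : Fin n) => F l i.castSucc) (k l) : ℝ) : EReal)

theorem calibratedThreshold_le_iff (F : ℕ → Fin (n + 1) → ℝ) (k : ℕ → ℕ) (l : ℕ) (v : ℝ) :
    calibratedThreshold F k l ≤ v ↔
      k l = 0 ∨ kthSmallestVal (pruneSeq (fun m (i : Fin n) => F m i.castSucc) k (l - 1))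
        (fun (i : Fin n) => F l i.castSucc) (k l) ≤ v := by
  unfold calibratedThreshold
  split_ifs with hk <;> simp [hk]

variable {s : Finset (Fin n)} {g : Fin (n + 1) → ℝ} {k : ℕ}

theorem last_mem_removeKSmallest_insert_iff (hg : g.Injective) (hks : k ≤ #s) :
    Fin.last n ∈ removeKSmallest (insert (Fin.last n) (s.map Fin.castSuccEmb)) g k ↔
      k = 0 ∨ kthSmallestVal s (fun i => g i.castSucc) k ≤ g (Fin.last n) := by
  rw [mem_removeKSmallest_insert_iff (by simp) hg.injOn (by rwa [card_map]), kthSmallestVal_map]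
  rfl

theorem removeKSmallest_insert_last (hg : g.Injective) (hks : k ≤ #s)
    (hpass : k = 0 ∨ kthSmallestVal s (fun i => g i.castSucc) k ≤ g (Fin.last n)) :
    removeKSmallest (insert (Fin.last n) (s.map Fin.castSuccEmb)) g k =
      insert (Fin.last n) ((removeKSmallest s (fun i => g i.castSucc) k).map Fin.castSuccEmb) := by
  rw [removeKSmallest_insert (by simp) hg.injOn (by rwa [card_map])
      (by rwa [kthSmallestVal_map]),
    removeKSmallest_map _ _ hg.injOn]
  rfl

variable {F : ℕ → Fin (n + 1) → ℝ} {k : ℕ → ℕ} {M : ℕ}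

theorem pruneSeq_eq_insert_last (hF : ∀ m ∈ Icc 1 M, (F m).Injective)
    (hk : ∑ m ∈ Icc 1 M, k m ≤ n)
    (hpass : ∀ l ∈ Icc 1 M, calibratedThreshold F k l ≤ F l (Fin.last n)) :
    pruneSeq F k M =
      insert (Fin.last n) ((pruneSeq (fun m i => F m i.castSucc) k M).map Fin.castSuccEmb) := by
  induction M with
  | zero => exact (Fin.univ_castSuccEmb n).trans (cons_eq_insert _ _ _)
  | succ M ih =>
    have hIcc : Icc 1 M ⊆ Icc 1 (M + 1) := Icc_subset_Icc_right M.le_succ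
    rw [pruneSeq, ih (fun m hm => hF m (hIcc hm)) ((sum_le_sum_of_subset hIcc).trans hk)
      fun l hl => hpass l (hIcc hl)]
    exact removeKSmallest_insert_last (hF (M + 1) (by simp))
      (le_card_pruneSeq (by rwa [Fintype.card_fin]))
      (by simpa only [calibratedThreshold_le_iff, Nat.add_sub_cancel] using hpass (M + 1) (by simp))

theorem last_mem_pruneSeq_iff (hF : ∀ m ∈ Icc 1 M, (F m).Injective)
    (hk : ∑ m ∈ Icc 1 M, k m ≤ n) :
    Fin.last n ∈ pruneSeq F k M ↔
      ∀ l ∈ Icc 1 M, calibratedThreshold F k l ≤ F l (Fin.last n) := by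
  induction M with
  | zero => simp [pruneSeq]
  | succ M ih =>
    have hIcc : Icc 1 M ⊆ Icc 1 (M + 1) := Icc_subset_Icc_right M.le_succ
    have hF' : ∀ m ∈ Icc 1 M, (F m).Injective := fun m hm => hF m (hIcc hm)
    have hk' : ∑ m ∈ Icc 1 M, k m ≤ n := (sum_le_sum_of_subset hIcc).trans hk
    rw [show Icc 1 (M + 1) = insert (M + 1) (Icc 1 M) from
      (insert_Icc_right_eq_Icc_succ (by simp)).symm, forall_mem_insert]
    by_cases hpass : ∀ l ∈ Icc 1 M, calibratedThreshold F k l ≤ F l (Fin.last n)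
    · rw [pruneSeq, pruneSeq_eq_insert_last hF' hk' hpass,
        last_mem_removeKSmallest_insert_iff (hF (M + 1) (by simp))
          (le_card_pruneSeq (by rwa [Fintype.card_fin])),
        and_iff_left hpass, calibratedThreshold_le_iff, Nat.add_sub_cancel]
    · exact iff_of_false (fun h => hpass ((ih hF' hk').1 (removeKSmallest_subset h)))
        fun h => hpass h.2

end FreshSample

theorem conformalK_succ_le {α : ℝ} (hα : α < 1) (N0 l : ℕ) :
    conformalK α N0 (l + 1) ≤ conformalN α N0 l := by
  rw [conformalK, Nat.add_sub_cancel, ← Nat.lt_add_one_iff, Nat.floor_lt' (by omega)]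
  have : (0 : ℝ) < conformalN α N0 l + 1 := by positivity
  push_cast
  nlinarith

theorem conformalN_add_sum_conformalK {α : ℝ} (hα : α < 1) (N0 l : ℕ) :
    conformalN α N0 l + ∑ m ∈ Icc 1 l, conformalK α N0 m = N0 := by
  induction l with
  | zero => simp [conformalN]
  | succ l ih =>
    have hk := conformalK_succ_le hα N0 l
    have hN : conformalN α N0 (l + 1) = conformalN α N0 l - conformalK α N0 (l + 1) := by
      rw [conformalN, conformalK, Nat.add_sub_cancel]
    rw [sum_Icc_succ_top (by omega), hN]
    omega

theorem sum_conformalK_le {α : ℝ} (hα : α < 1) (N0 L : ℕ) :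
    ∑ l ∈ Icc 1 L, conformalK α N0 l ≤ N0 :=
  (Nat.le_add_left _ _).trans (conformalN_add_sum_conformalK hα N0 L).le

section Measurability

variable {α ι : Type*} [MeasurableSpace α] [Fintype ι]

theorem measurable_card_filter {s : α → Finset ι} {p : α → ι → Prop} [∀ x, DecidablePred (p x)]
    (hs : ∀ i, MeasurableSet {x | i ∈ s x}) (hp : ∀ i, MeasurableSet {x | p x i}) :
    Measurable fun x => #{i ∈ s x | p x i} := by
  classical
  have : (fun x => #{i ∈ s x | p x i}) = fun x => ∑ i, if i ∈ s x ∧ p x i then 1 else 0 := by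
    ext x
    rw [sum_boole]
    congr 1
    ext i
    simp
  rw [this]
  exact Finset.measurable_sum _ fun i _ => Measurable.ite ((hs i).inter (hp i)) measurable_const
    measurable_const

variable [LinearOrder ι]

theorem measurableSet_mem_removeKSmallest {s : α → Finset ι} {f : α → ι → ℝ}
    (hs : ∀ i, MeasurableSet {x | i ∈ s x}) (hf : ∀ i, Measurable fun x => f x i) (k : ℕ)
    (i : ι) : MeasurableSet {x | i ∈ removeKSmallest (s x) (f x) k} := by
  simp only [removeKSmallest, mem_filter, Set.ofPred_and]
  refine (hs i).inter (measurableSet_lt measurable_const (measurable_card_filter hs fun j => ?_))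
  exact (measurableSet_lt (hf j) (hf i)).union
    ((measurableSet_eq_fun (hf j) (hf i)).inter (MeasurableSet.const (j ≤ i)))

theorem measurableSet_mem_pruneSeq {F : α → ℕ → ι → ℝ} {k : ℕ → ℕ} {l : ℕ}
    (hF : ∀ m ∈ Icc 1 l, ∀ i, Measurable fun x => F x m i) (i : ι) :
    MeasurableSet {x | i ∈ pruneSeq (F x) k l} := by
  induction l generalizing i with
  | zero => simp [pruneSeq]
  | succ l ih =>
    exact measurableSet_mem_removeKSmallest
      (ih fun m hm => hF m (Icc_subset_Icc_right l.le_succ hm)) (hF (l + 1) (by simp)) _ i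

end Measurability

section Probability

open scoped ENNReal

variable {Ω E ι : Type*} [MeasurableSpace Ω] [MeasurableSpace E] {P : Measure Ω}

theorem measure_eq_eq_zero_of_indepFun [IsFiniteMeasure P] {U V : Ω → ℝ} (hU : Measurable U)
    (hV : Measurable V) (hUV : IndepFun U V P) [NullSingletonClass (P.map V)] :
    P {ω | U ω = V ω} = 0 := by
  have hD : MeasurableSet {p : ℝ × ℝ | p.1 = p.2} :=
    measurableSet_eq_fun measurable_fst measurable_snd
  have hpre : {ω | U ω = V ω} = (fun ω => (U ω, V ω)) ⁻¹' {p | p.1 = p.2} := rfl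
  rw [hpre, ← Measure.map_apply (hU.prodMk hV) hD,
    hUV.map_prod_eq_prod_map_map hU.aemeasurable hV.aemeasurable, Measure.prod_apply hD]
  simp

theorem ae_injective_of_iIndepFun [IsProbabilityMeasure P] [Countable ι] {X : ι → Ω → E}
    (hX : ∀ i, Measurable (X i)) (hind : iIndepFun X P) {μ : Measure E}
    (hlaw : ∀ i, P.map (X i) = μ) {g : E → ℝ} (hg : Measurable g) [NullSingletonClass (μ.map g)] :
    ∀ᵐ ω ∂P, (fun i => g (X i ω)).Injective := by
  have hpair : ∀ i j, ∀ᵐ ω ∂P, g (X i ω) = g (X j ω) → i = j := by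
    intro i j
    by_cases hij : i = j
    · exact ae_of_all _ fun _ _ => hij
    have : NullSingletonClass (P.map (g ∘ X j)) := by
      rwa [← Measure.map_map hg (hX j), hlaw]
    have hnull := measure_eq_eq_zero_of_indepFun (hg.comp (hX i)) (hg.comp (hX j))
      ((hind.indepFun hij).comp hg hg)
    filter_upwards [(ae_iff (p := fun ω => g (X i ω) ≠ g (X j ω))).2 (by simpa using hnull)]
      with ω hω h using absurd h hω
  filter_upwards [ae_all_iff.2 fun i => ae_all_iff.2 (hpair i)] with ω hω i j using hω i j

theorem map_comp_equiv_eq_map [IsProbabilityMeasure P] [Fintype ι] {X : ι → Ω → E}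
    (hX : ∀ i, Measurable (X i)) (hind : iIndepFun X P) {μ : Measure E}
    (hlaw : ∀ i, P.map (X i) = μ) (e : ι ≃ ι) :
    P.map (fun ω i => X (e i) ω) = P.map (fun ω i => X i ω) := by
  rw [(iIndepFun_iff_map_fun_eq_pi_map fun i => (hX (e i)).aemeasurable).1
      (hind.precomp e.injective),
    (iIndepFun_iff_map_fun_eq_pi_map fun i => (hX i).aemeasurable).1 hind]
  simp only [hlaw]

theorem sum_measure_mem_eq_lintegral_card [Fintype ι] (W : Ω → Finset ι)
    (hW : ∀ i, MeasurableSet {ω | i ∈ W ω}) :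
    ∑ i, P {ω | i ∈ W ω} = ∫⁻ ω, (#(W ω) : ℝ≥0∞) ∂P := by
  classical
  have hcard : ∀ ω, (#(W ω) : ℝ≥0∞) = ∑ i, {ω | i ∈ W ω}.indicator 1 ω := by
    intro ω
    simp [Set.indicator_apply]
  simp_rw [hcard]
  rw [lintegral_finsetSum _ fun i _ => measurable_one.indicator (hW i)]
  simp [lintegral_indicator_one (hW _)]

theorem measure_mem_eq_div_card [IsProbabilityMeasure P] [Fintype ι] (W : Ω → Finset ι)
    (hW : ∀ i, MeasurableSet {ω | i ∈ W ω}) (a : ι)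
    (hsymm : ∀ i, P {ω | i ∈ W ω} = P {ω | a ∈ W ω}) {c : ℕ} (hcard : ∀ᵐ ω ∂P, #(W ω) = c) :
    P {ω | a ∈ W ω} = c / Fintype.card ι := by
  have : Nonempty ι := ⟨a⟩
  rw [ENNReal.eq_div_iff (by simp) (by simp)]
  calc Fintype.card ι * P {ω | a ∈ W ω}
      = ∑ i, P {ω | i ∈ W ω} := by simp [hsymm]
    _ = ∫⁻ ω, (#(W ω) : ℝ≥0∞) ∂P := sum_measure_mem_eq_lintegral_card W hW
    _ = ∫⁻ _, (c : ℝ≥0∞) ∂P := lintegral_congr_ae (hcard.mono fun ω h => by simp only [h])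
    _ = c := by simp

theorem measure_mem_pruneSeq_equiv [IsProbabilityMeasure P] [Fintype ι] [LinearOrder ι]
    {X : ι → Ω → E} (hX : ∀ i, Measurable (X i)) (hind : iIndepFun X P) {μ : Measure E}
    (hlaw : ∀ i, P.map (X i) = μ) {σ : ℕ → E → ℝ} {k : ℕ → ℕ} {L : ℕ}
    (hσ : ∀ m ∈ Icc 1 L, Measurable (σ m))
    (hinj : ∀ᵐ ω ∂P, ∀ m ∈ Icc 1 L, (fun i => σ m (X i ω)).Injective) (e : ι ≃ ι) (i : ι) :
    P {ω | e i ∈ pruneSeq (fun m j => σ m (X j ω)) k L} =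
      P {ω | i ∈ pruneSeq (fun m j => σ m (X j ω)) k L} := by
  have hS : MeasurableSet {x : ι → E | i ∈ pruneSeq (fun m j => σ m (x j)) k L} :=
    measurableSet_mem_pruneSeq (fun m hm j => (hσ m hm).comp (measurable_pi_apply j)) i
  calc P {ω | e i ∈ pruneSeq (fun m j => σ m (X j ω)) k L}
      = P {ω | i ∈ pruneSeq (fun m j => σ m (X (e j) ω)) k L} := by
        refine measure_congr (Filter.eventuallyEq_set.2 ?_)
        filter_upwards [hinj] with ω hω
        rw [← map_pruneSeq_comp_equiv e hω]
        exact mem_map' e.toEmbedding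
    _ = P.map (fun ω j => X (e j) ω) {x | i ∈ pruneSeq (fun m j => σ m (x j)) k L} :=
        (Measure.map_apply (measurable_pi_lambda _ fun j => hX (e j)) hS).symm
    _ = P {ω | i ∈ pruneSeq (fun m j => σ m (X j ω)) k L} := by
        rw [map_comp_equiv_eq_map hX hind hlaw, Measure.map_apply (measurable_pi_lambda _ hX) hS]
        rfl

end Probability

theorem dynamic_conformal_beam_exact_coverage_general
    {Ω E : Type*} [MeasurableSpace Ω] [MeasurableSpace E]
    (P : Measure Ω) [IsProbabilityMeasure P]
    (N0 : ℕ)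
    (X : Fin (N0 + 1) → Ω → E)
    (hXmeas : ∀ i, Measurable (X i))
    (hXindep : iIndepFun X P)
    (μ : Measure E) (hXlaw : ∀ i, P.map (X i) = μ)
    (α : ℝ) (hα : α ∈ Set.Ioo (0 : ℝ) 1)
    (L : ℕ)
    (σ : ℕ → E → ℝ)
    (hσmeas : ∀ l ∈ Finset.Icc 1 L, Measurable (σ l))
    (hatomless : ∀ l ∈ Finset.Icc 1 L, NoAtoms (μ.map (σ l))) :
    (P {ω | ∀ l ∈ Finset.Icc 1 L,
        (if conformalK α N0 l = 0 then (⊥ : EReal) else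
          ((kthSmallestVal
              (pruneSeq (fun m (i : Fin N0) => σ m (X i.castSucc ω)) (conformalK α N0) (l - 1))
              (fun (i : Fin N0) => σ l (X i.castSucc ω)) (conformalK α N0 l) : ℝ) : EReal))
          ≤ ((σ l (X (Fin.last N0) ω) : ℝ) : EReal)}).toReal
      = 1 - (∑ l ∈ Finset.Icc 1 L, (conformalK α N0 l : ℝ)) / (N0 + 1) := by
  let W ω : Finset (Fin (N0 + 1)) := pruneSeq (fun m i => σ m (X i ω)) (conformalK α N0) L
  have : IsProbabilityMeasure μ :=
    hXlaw 0 ▸ Measure.isProbabilityMeasure_map (hXmeas 0).aemeasurable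
  have hsum := sum_conformalK_le hα.2 N0 L
  have hinj : ∀ᵐ ω ∂P, ∀ l ∈ Icc 1 L, (fun i => σ l (X i ω)).Injective :=
    (Filter.eventually_all_finset _).2 fun l hl =>
      haveI : NullSingletonClass (μ.map (σ l)) := hatomless l hl
      ae_injective_of_iIndepFun hXmeas hXindep hXlaw (hσmeas l hl)
  have hW : ∀ i, MeasurableSet {ω | i ∈ W ω} :=
    measurableSet_mem_pruneSeq fun m hm i => (hσmeas m hm).comp (hXmeas i)
  have hexch : ∀ i, P {ω | i ∈ W ω} = P {ω | Fin.last N0 ∈ W ω} := fun i => by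
    simpa using measure_mem_pruneSeq_equiv hXmeas hXindep hXlaw hσmeas hinj
      (Equiv.swap i (Fin.last N0)) (Fin.last N0)
  have hcard : ∀ᵐ ω ∂P, #(W ω) = N0 + 1 - ∑ l ∈ Icc 1 L, conformalK α N0 l :=
    ae_of_all _ fun ω => by rw [card_pruneSeq, Fintype.card_fin]
  refine (congrArg ENNReal.toReal ((measure_congr (Filter.eventuallyEq_set.2 ?_)).trans
    (measure_mem_eq_div_card W hW _ hexch hcard))).trans ?_
  · filter_upwards [hinj] with ω hω
    exact (last_mem_pruneSeq_iff hω hsum).symm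
  rw [ENNReal.toReal_div, Fintype.card_fin, ENNReal.toReal_natCast, ENNReal.toReal_natCast,
    Nat.cast_sub (by omega)]
  push_cast
  field_simp

/-- **Dynamic conformal beam coverage guarantee** (Proposition 2).
Given i.i.d. samples `X 1, …, X N₀, X (N₀+1)` with law `μ`, per-step scores `σ l` with atomless
pushforwards, and the iteratively calibrated thresholds
`t_l = (k_l)`-th smallest of `σ l` on `W_{l-1}` (with `t_l = ⊥` if `k_l = 0`, where
`k_l = ⌊α(N_{l-1}+1)⌋`, `N_l = N_{l-1} - k_l`), the probability that the fresh sample passes all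
`L` thresholds is exactly `1 - (Σ_{l=1}^L k_l)/(N₀+1)`. -/
theorem dynamic_conformal_beam_exact_coverage
    {Ω E : Type*} [MeasurableSpace Ω] [MeasurableSpace E]
    (P : Measure Ω) [IsProbabilityMeasure P]
    (N0 : ℕ) (hN0 : 0 < N0)
    (X : Fin (N0 + 1) → Ω → E)
    (hXmeas : ∀ i, Measurable (X i))
    (hXindep : iIndepFun X P)
    (μ : Measure E) (hXlaw : ∀ i, P.map (X i) = μ)
    (α : ℝ) (hα : α ∈ Set.Ioo (0 : ℝ) 1)
    (L : ℕ) (hL : 0 < L)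
    (σ : ℕ → E → ℝ)
    (hσmeas : ∀ l ∈ Finset.Icc 1 L, Measurable (σ l))
    (hatomless : ∀ l ∈ Finset.Icc 1 L, NoAtoms (μ.map (σ l))) :
    (P {ω | ∀ l ∈ Finset.Icc 1 L,
        (if conformalK α N0 l = 0 then (⊥ : EReal) else
          ((kthSmallestVal
              (pruneSeq (fun m (i : Fin N0) => σ m (X i.castSucc ω)) (conformalK α N0) (l - 1))
              (fun (i : Fin N0) => σ l (X i.castSucc ω)) (conformalK α N0 l) : ℝ) : EReal))
          ≤ ((σ l (X (Fin.last N0) ω) : ℝ) : EReal)}).toReal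
      = 1 - (∑ l ∈ Finset.Icc 1 L, (conformalK α N0 l : ℝ)) / (N0 + 1) :=
  dynamic_conformal_beam_exact_coverage_general P N0 X hXmeas hXindep μ hXlaw α hα L σ hσmeas
    hatomless

end
end

section
/- Let N be a positive integer and let X₁,…,X_N, X_{N+1} be independent, identically distributed real-valued random variables whose common distribution is atomless. Fix α ∈ (0,1) with α(N+1) ≥ 1, set k = ⌊α(N+1)⌋, and let t be the k-th smallest value among X₁,…,X_N. Then P( X_{N+1} ≥ t ) = 1 − k/(N+1), and in particular P( X_{N+1} ≥ t ) ≥ 1 − α. -/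
/-
The N + 1 scores are exchangeable and almost surely pairwise distinct (independence plus an
atomless law), so the rank of the test score among all N + 1 of them is uniform on
{1, …, N + 1}. The event t ≤ X_{N+1} says that at least k calibration scores lie below the
test score, i.e. that this rank exceeds k, which has probability (N + 1 - k)/(N + 1).
-/

open MeasureTheory ProbabilityTheory Finset

noncomputable section

open scoped ENNReal

theorem List.Pairwise.getD_le_iff_lt_countP {α : Type*} [LinearOrder α] {l : List α}
    (hl : l.Pairwise (· ≤ ·)) (d y : α) {k : ℕ} (hk : k < l.length) :
    l.getD k d ≤ y ↔ k < l.countP (· ≤ y) := by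
  induction l generalizing k with
  | nil => simp at hk
  | cons a l ih =>
    obtain ⟨ha, hl⟩ := List.pairwise_cons.mp hl
    by_cases hay : a ≤ y
    · cases k with
      | zero => simp [hay]
      | succ k => rw [List.getD_cons_succ, ih hl (by simpa using hk)]; simp [hay]
    · have hcount : l.countP (· ≤ y) = 0 :=
        List.countP_eq_zero.mpr fun b hb hby => hay ((ha b hb).trans (by simpa using hby))
      cases k with
      | zero => simp [hay, hcount]
      | succ k => rw [List.getD_cons_succ, ih hl (by simpa using hk)]; simp [hay, hcount]

theorem kthSmallestVal_le_iff_s9 {ι : Type*} (s : Finset ι) (f : ι → ℝ) {k : ℕ}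
    (hk1 : 1 ≤ k) (hk2 : k ≤ #s) (y : ℝ) :
    kthSmallestVal s f k ≤ y ↔ k ≤ #{i ∈ s | f i ≤ y} := by
  have hsorted := (s.val.map f).pairwise_sort (· ≤ ·)
  have hlen : ((s.val.map f).sort (· ≤ ·)).length = #s := by simp
  rw [kthSmallestVal, hsorted.getD_le_iff_lt_countP _ _ (by omega), ← Multiset.coe_countP,
    Multiset.sort_eq, Multiset.countP_map, ← filter_val, ← card_val]
  omega

section coordRank

variable {ι α : Type*} [Fintype ι] [LinearOrder α]

def coordRank (x : ι → α) (j : ι) : ℕ := #{i | x i ≤ x j}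

theorem coordRank_lt_coordRank {x : ι → α} {a b : ι} (h : x a < x b) :
    coordRank x a < coordRank x b := by
  refine card_lt_card ⟨monotone_filter_right _ fun i _ hi => hi.trans h.le, fun hsub => ?_⟩
  exact h.not_ge (by simpa using hsub (mem_filter.mpr ⟨mem_univ b, le_rfl⟩))

theorem coordRank_injective {x : ι → α} (hx : Function.Injective x) :
    Function.Injective (coordRank x) := by
  intro a b hab
  by_contra hne
  rcases (hx.ne hne).lt_or_gt with h | h
  · exact (coordRank_lt_coordRank h).ne hab
  · exact (coordRank_lt_coordRank h).ne' hab

theorem coordRank_mem_Icc (x : ι → α) (j : ι) : coordRank x j ∈ Icc 1 (Fintype.card ι) :=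
  mem_Icc.mpr ⟨card_pos.mpr ⟨j, by simp⟩, card_filter_le _ _⟩

theorem card_lt_coordRank {x : ι → α} (hx : Function.Injective x) (k : ℕ) :
    #{j | k < coordRank x j} = Fintype.card ι - k := by
  have himage : univ.image (coordRank x) = Icc 1 (Fintype.card ι) :=
    eq_of_subset_of_card_le (image_subset_iff.mpr fun j _ => coordRank_mem_Icc x j)
      (by simp [card_image_of_injective _ (coordRank_injective hx)])
  calc #{j | k < coordRank x j} = #{r ∈ univ.image (coordRank x) | k < r} := by
        rw [filter_image, card_image_of_injective _ (coordRank_injective hx)]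
    _ = Fintype.card ι - k := by
        rw [himage, show {r ∈ Icc 1 (Fintype.card ι) | k < r} = Ioc k (Fintype.card ι) by
          ext r; simp only [mem_filter, mem_Icc, mem_Ioc]; omega, Nat.card_Ioc]

theorem coordRank_comp_perm (x : ι → α) (σ : Equiv.Perm ι) (j : ι) :
    coordRank (x ∘ σ) j = coordRank x (σ j) :=
  card_equiv σ (by simp)

theorem coordRank_last {n : ℕ} (x : Fin (n + 1) → α) :
    coordRank x (Fin.last n) = #{i : Fin n | x i.castSucc ≤ x (Fin.last n)} + 1 := by
  simp only [coordRank, card_filter, Fin.sum_univ_castSucc]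
  simp

end coordRank

section coordRankMeasure

variable {ι : Type*} [Fintype ι]

theorem measurable_coordRank (j : ι) : Measurable fun x : ι → ℝ => coordRank x j := by
  simp only [coordRank, card_filter]
  exact Finset.measurable_sum _ fun i _ => Measurable.ite
    (measurableSet_le (measurable_pi_apply i) (measurable_pi_apply j)) measurable_const
    measurable_const

/-- Off the null set of ties the ranks are a permutation of `1, …, card ι`, so exactly
`card ι - k` of them exceed `k`; by exchangeability every coordinate contributes equally. -/
theorem measure_lt_coordRank (π : Measure (ι → ℝ)) [IsProbabilityMeasure π]
    (hπ : ∀ σ : Equiv.Perm ι, MeasurePreserving (· ∘ σ) π π)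
    (hinj : ∀ᵐ x ∂π, Function.Injective x) (k : ℕ) (j : ι) :
    π {x | k < coordRank x j} = ((Fintype.card ι - k : ℕ) : ℝ≥0∞) / Fintype.card ι := by
  classical
  set A : ι → Set (ι → ℝ) := fun i => {x | k < coordRank x i}
  have hA : ∀ i, MeasurableSet (A i) := fun i => measurable_coordRank i measurableSet_Ioi
  have hexch : ∀ i, π (A i) = π (A j) := by
    intro i
    have hpre : (· ∘ Equiv.swap i j) ⁻¹' A j = A i := by
      ext x; simp [A, coordRank_comp_perm]
    rw [← hpre, (hπ _).measure_preimage (hA j).nullMeasurableSet]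
  have hsum : ∑ i, π (A i) = ((Fintype.card ι - k : ℕ) : ℝ≥0∞) := by
    calc ∑ i, π (A i) = ∫⁻ x, ∑ i, (A i).indicator 1 x ∂π := by
          rw [lintegral_finsetSum _ fun i _ => measurable_one.indicator (hA i)]
          simp [lintegral_indicator_one (hA _)]
      _ = ∫⁻ _, ((Fintype.card ι - k : ℕ) : ℝ≥0∞) ∂π := by
          refine lintegral_congr_ae (hinj.mono fun x hx => ?_)
          rw [← card_lt_coordRank hx k]
          simp [A, Set.indicator_apply]
      _ = ((Fintype.card ι - k : ℕ) : ℝ≥0∞) := by rw [lintegral_const, measure_univ, mul_one]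
  have hcard : (Fintype.card ι : ℝ≥0∞) ≠ 0 :=
    Nat.cast_ne_zero.mpr (Fintype.card_pos_iff.mpr ⟨j⟩).ne'
  rw [ENNReal.eq_div_iff hcard (ENNReal.natCast_ne_top _), ← hsum]
  simp [hexch, A]

end coordRankMeasure

theorem ProbabilityTheory.IndepFun.measure_eq_eq_zero {Ω : Type*} [MeasurableSpace Ω]
    {P : Measure Ω} [IsFiniteMeasure P] {X Y : Ω → ℝ} (hXY : IndepFun X Y P)
    (hX : AEMeasurable X P) (hY : AEMeasurable Y P)
    [NullSingletonClass (P.map Y)] : P {ω | X ω = Y ω} = 0 := by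
  have hdiag : MeasurableSet {p : ℝ × ℝ | p.1 = p.2} := measurableSet_diagonal
  calc P {ω | X ω = Y ω} = P.map (fun ω => (X ω, Y ω)) {p | p.1 = p.2} :=
        (Measure.map_apply_of_aemeasurable (hX.prodMk hY) hdiag).symm
    _ = ((P.map X).prod (P.map Y)) {p | p.1 = p.2} := by
        rw [(indepFun_iff_map_prod_eq_prod_map_map hX hY).mp hXY]
    _ = 0 := by
        rw [Measure.prod_apply hdiag]
        simp [Set.preimage]

theorem ae_injective_pi {ι : Type*} [Fintype ι] (μ : Measure ℝ) [IsProbabilityMeasure μ]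
    [NullSingletonClass μ] : ∀ᵐ x ∂Measure.pi (fun _ : ι => μ), Function.Injective x := by
  have hindep : iIndepFun (fun i (x : ι → ℝ) => x i) (Measure.pi fun _ => μ) :=
    iIndepFun_pi (X := fun _ => id) fun _ => aemeasurable_id
  have hties : ∀ᵐ x ∂Measure.pi (fun _ : ι => μ), ∀ i j, i ≠ j → x i ≠ x j := by
    refine ae_all_iff.mpr fun i => ae_all_iff.mpr fun j => ?_
    by_cases hij : i = j
    · simp [hij]
    have : NullSingletonClass ((Measure.pi fun _ : ι => μ).map fun x => x j) := by
      rw [(measurePreserving_eval (fun _ : ι => μ) j).map_eq]; infer_instance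
    have hnull := (hindep.indepFun hij).measure_eq_eq_zero (measurable_pi_apply i).aemeasurable
      (measurable_pi_apply j).aemeasurable
    filter_upwards [measure_eq_zero_iff_ae_notMem.mp hnull] with x hx using fun _ => hx
  filter_upwards [hties] with x hx a b hab
  by_contra hne
  exact hx a b hne hab

theorem measurePreserving_comp_perm_pi {ι : Type*} [Fintype ι] (μ : Measure ℝ) [SigmaFinite μ]
    (σ : Equiv.Perm ι) :
    MeasurePreserving (· ∘ σ) (Measure.pi fun _ : ι => μ) (Measure.pi fun _ : ι => μ) :=
  measurePreserving_arrowCongr' (fun _ => μ) (fun _ => μ) σ.symm (MeasurableEquiv.refl ℝ)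
    fun _ => MeasurePreserving.id μ

theorem split_conformal_coverage_general
    {Ω : Type*} [MeasurableSpace Ω] (P : Measure Ω) [IsProbabilityMeasure P]
    (N : ℕ)
    (X : Fin (N + 1) → Ω → ℝ)
    (hXmeas : ∀ i, Measurable (X i))
    (hXindep : iIndepFun X P)
    (μ : Measure ℝ) (hXlaw : ∀ i, P.map (X i) = μ) (hatomless : NoAtoms μ)
    (α : ℝ) (hα : α ∈ Set.Ioo (0 : ℝ) 1) (hαN : 1 ≤ α * (N + 1))
    (k : ℕ) (hk : k = ⌊α * (N + 1)⌋₊) :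
    (P {ω | kthSmallestVal Finset.univ (fun i : Fin N => X i.castSucc ω) k
        ≤ X (Fin.last N) ω}).toReal = 1 - (k : ℝ) / (N + 1)
    ∧ 1 - α ≤
      (P {ω | kthSmallestVal Finset.univ (fun i : Fin N => X i.castSucc ω) k
        ≤ X (Fin.last N) ω}).toReal := by
  have hk1 : 1 ≤ k := hk ▸ Nat.le_floor (by exact_mod_cast hαN)
  have hkα : (k : ℝ) ≤ α * (N + 1) := hk ▸ Nat.floor_le (by positivity)
  have hkN : k ≤ N :=
    Nat.lt_add_one_iff.mp (by exact_mod_cast (by nlinarith [hα.2] : (k : ℝ) < N + 1))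
  have : IsProbabilityMeasure μ :=
    hXlaw 0 ▸ Measure.isProbabilityMeasure_map (hXmeas 0).aemeasurable
  have : NullSingletonClass μ := hatomless
  have hlaw : P.map (fun ω i => X i ω) = Measure.pi fun _ => μ := by
    simp_rw [(iIndepFun_iff_map_fun_eq_pi_map fun i => (hXmeas i).aemeasurable).mp hXindep, hXlaw]
  have hevent : {ω | kthSmallestVal univ (fun i : Fin N => X i.castSucc ω) k ≤ X (Fin.last N) ω}
      = (fun ω i => X i ω) ⁻¹' {x | k < coordRank x (Fin.last N)} := by
    ext ω
    simp only [Set.mem_ofPred_eq, Set.mem_preimage, coordRank_last,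
      kthSmallestVal_le_iff_s9 (univ : Finset (Fin N)) _ hk1 (by simpa using hkN)]
    omega
  have hcoverage : (P {ω | kthSmallestVal univ (fun i : Fin N => X i.castSucc ω) k
      ≤ X (Fin.last N) ω}).toReal = 1 - (k : ℝ) / (N + 1) := by
    have hE : MeasurableSet {x : Fin (N + 1) → ℝ | k < coordRank x (Fin.last N)} :=
      measurable_coordRank _ measurableSet_Ioi
    rw [hevent, ← Measure.map_apply (measurable_pi_lambda _ hXmeas) hE, hlaw,
      measure_lt_coordRank _ (measurePreserving_comp_perm_pi μ) (ae_injective_pi μ),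
      ENNReal.toReal_div, ENNReal.toReal_natCast, ENNReal.toReal_natCast, Fintype.card_fin,
      Nat.cast_sub (by omega : k ≤ N + 1)]
    push_cast
    field_simp
  refine ⟨hcoverage, hcoverage ▸ ?_⟩
  rw [sub_le_sub_iff_left, div_le_iff₀ (by positivity)]
  exact hkα

/-- **Split conformal coverage guarantee.**
If `X₁, …, X_N, X_{N+1}` are i.i.d. real (conformity) scores with atomless common law,
`α ∈ (0,1)` with `α(N+1) ≥ 1`, `k = ⌊α(N+1)⌋`, and `t` is the `k`-th smallest calibration
score among `X₁, …, X_N`, then `P(X_{N+1} ≥ t) = 1 - k/(N+1) ≥ 1 - α`. -/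
theorem split_conformal_coverage
    {Ω : Type*} [MeasurableSpace Ω] (P : Measure Ω) [IsProbabilityMeasure P]
    (N : ℕ) (hN : 0 < N)
    (X : Fin (N + 1) → Ω → ℝ)
    (hXmeas : ∀ i, Measurable (X i))
    (hXindep : iIndepFun X P)
    (μ : Measure ℝ) (hXlaw : ∀ i, P.map (X i) = μ) (hatomless : NoAtoms μ)
    (α : ℝ) (hα : α ∈ Set.Ioo (0 : ℝ) 1) (hαN : 1 ≤ α * (N + 1))
    (k : ℕ) (hk : k = ⌊α * (N + 1)⌋₊) :
    (P {ω | kthSmallestVal Finset.univ (fun i : Fin N => X i.castSucc ω) k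
        ≤ X (Fin.last N) ω}).toReal = 1 - (k : ℝ) / (N + 1)
    ∧ 1 - α ≤
      (P {ω | kthSmallestVal Finset.univ (fun i : Fin N => X i.castSucc ω) k
        ≤ X (Fin.last N) ω}).toReal :=
  split_conformal_coverage_general P N X hXmeas hXindep μ hXlaw hatomless α hα hαN k hk

end
end
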